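/- arXiv:1907.02449 — 2 statements merged into one kernel-verified Lean document; each statement's English description precedes it below -/
import Mathlib

section
/- Let α_1, ..., α_m and β_1, ..., β_m be real coefficients of an exponential sum with accuracy ε > 0 over the interval [1, R], i.e., |1/x − Σ_{j=1}^m α_j e^{−β_j x}| ≤ ε for all x ∈ [1, R]. Let A be a diagonalizable complex matrix, A = V D V^{-1} with D diagonal and V invertible, whose eigenvalues are all real and contained in [1, R]. Then ‖A^{-1} − Σ_{j=1}^m α_j exp(−β_j A)‖_2 ≤ C ε, where C = ‖V‖_2 · ‖V^{-1}‖_2 and ‖·‖_2 denotes the spectral norm. In particular, if A is normal then C = 1. -/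
/-!
If `A = V D V⁻¹` with `D` diagonal, then `A⁻¹` and every `exp (-β A)` are the conjugates by `V` of
the corresponding diagonal matrices, so the error matrix is `V E V⁻¹`, where `E` is diagonal with
the scalar errors `1/λ - ∑ α_j e^{-β_j λ}` at the eigenvalues `λ ∈ [1, R]` on its diagonal. Hence
`‖E‖₂ ≤ ε`, and submultiplicativity gives the factor `‖V‖₂ ‖V⁻¹‖₂`. A normal matrix with real
spectrum is Hermitian, hence diagonalizable by a unitary `U`, and `‖U E U⁻¹‖₂ = ‖E‖₂`.
-/

open scoped Matrix

/-- The spectral norm of a complex square matrix: the operator norm induced by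
the Euclidean vector norm. -/
noncomputable def specNorm {n : Type*} [Fintype n] [DecidableEq n] (A : Matrix n n ℂ) : ℝ :=
  ‖Matrix.toEuclideanCLM (𝕜 := ℂ) A‖

-- Under these instances `‖A‖` is definitionally `specNorm A`.
open scoped Matrix.Norms.L2Operator

noncomputable def expSumResidual {ι 𝔸 : Type*} [Fintype ι] [Ring 𝔸] [Inv 𝔸] [Module ℂ 𝔸]
    [Algebra ℚ 𝔸] [TopologicalSpace 𝔸] [IsTopologicalRing 𝔸] (α β : ι → ℂ) (a : 𝔸) : 𝔸 :=
  a⁻¹ - ∑ j, α j • NormedSpace.exp (-β j • a)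

lemma norm_expSumResidual_ofReal {ι : Type*} [Fintype ι] (α β : ι → ℝ) (x : ℝ) :
    ‖expSumResidual (fun j => (α j : ℂ)) (fun j => (β j : ℂ)) (x : ℂ)‖ =
      |1 / x - ∑ j, α j * Real.exp (-β j * x)| := by
  rw [← Real.norm_eq_abs, ← Complex.norm_real]
  push_cast
  simp only [expSumResidual, smul_eq_mul, neg_mul, ← Complex.exp_eq_exp_ℂ, one_div]

namespace Matrix
variable {ι n : Type*} [Fintype ι] [Fintype n] [DecidableEq n]

lemma inv_diagonal_of_ne_zero {K : Type*} [Field K] {d : n → K} (hd : ∀ i, d i ≠ 0) :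
    (diagonal d)⁻¹ = diagonal d⁻¹ :=
  inv_eq_right_inv <| by
    rw [diagonal_mul_diagonal, ← diagonal_one]
    exact congrArg diagonal (funext fun i => mul_inv_cancel₀ (hd i))

lemma expSumResidual_diagonal (α β : ι → ℂ) {d : n → ℂ} (hd : ∀ i, d i ≠ 0) :
    expSumResidual α β (diagonal d) = diagonal fun i => expSumResidual α β (d i) := by
  have hsum (f : ι → n → ℂ) : ∑ j, diagonal (f j) = diagonal (∑ j, f j) :=
    (map_sum (diagonalAddMonoidHom n ℂ) f _).symm
  simp only [expSumResidual, inv_diagonal_of_ne_zero hd, ← diagonal_smul, exp_diagonal, hsum,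
    diagonal_sub]
  congr 2
  funext i
  simp only [Pi.inv_apply, Finset.sum_apply, Pi.smul_apply, Pi.exp_def]

lemma expSumResidual_conj (α β : ι → ℂ) (A : Matrix n n ℂ) {V : Matrix n n ℂ}
    (hV : IsUnit V.det) :
    expSumResidual α β (V * A * V⁻¹) = V * expSumResidual α β A * V⁻¹ := by
  have hinv : (V * A * V⁻¹)⁻¹ = V * A⁻¹ * V⁻¹ := by
    rw [mul_inv_rev, mul_inv_rev, nonsing_inv_nonsing_inv V hV, mul_assoc]
  have hexp (c : ℂ) :
      NormedSpace.exp (c • (V * A * V⁻¹)) = V * NormedSpace.exp (c • A) * V⁻¹ := by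
    rw [← smul_mul_assoc, ← mul_smul_comm, exp_conj _ _ ((isUnit_iff_isUnit_det V).mpr hV)]
  simp only [expSumResidual, hinv, hexp, mul_sub, sub_mul, Finset.mul_sum, Finset.sum_mul,
    mul_smul_comm, smul_mul_assoc]

lemma spectrum_conj (R : Type*) {α : Type*} [CommSemiring R] [CommRing α] [Algebra R α]
    (A : Matrix n n α) {V : Matrix n n α} (hV : IsUnit V.det) :
    spectrum R (V * A * V⁻¹) = spectrum R A := by
  lift V to (Matrix n n α)ˣ using (isUnit_iff_isUnit_det V).mpr hV
  rw [← coe_units_inv, spectrum.units_conjugate]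

lemma norm_diagonal_le {𝕜 : Type*} [RCLike 𝕜] {d : n → 𝕜} {ε : ℝ} (hε : 0 ≤ ε) (hd : ∀ i, ‖d i‖ ≤ ε) :
    ‖diagonal d‖ ≤ ε := by
  rw [l2_opNorm_diagonal]
  exact (pi_norm_le_iff_of_nonneg hε).mpr hd

lemma isHermitian_of_spectrum_subset_range_ofReal {A : Matrix n n ℂ} [IsStarNormal A]
    (h : spectrum ℂ A ⊆ Set.range ((↑) : ℝ → ℂ)) : A.IsHermitian :=
  QuasispectrumRestricts.isSelfAdjoint A <|
    SpectrumRestricts.of_subset_range_algebraMap Complex.ofReal_re h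

theorem norm_expSumResidual_conj_diagonal_le (α β : ι → ℂ) {V : Matrix n n ℂ} (hV : IsUnit V.det)
    {d : n → ℂ} (hd : ∀ i, d i ≠ 0) {ε : ℝ} (hε : 0 ≤ ε)
    (hres : ∀ i, ‖expSumResidual α β (d i)‖ ≤ ε) :
    ‖expSumResidual α β (V * diagonal d * V⁻¹)‖ ≤ ‖V‖ * ‖V⁻¹‖ * ε := by
  rw [expSumResidual_conj _ _ _ hV, expSumResidual_diagonal _ _ hd]
  calc ‖V * diagonal (fun i => expSumResidual α β (d i)) * V⁻¹‖
      ≤ ‖V‖ * ‖diagonal (fun i => expSumResidual α β (d i))‖ * ‖V⁻¹‖ := norm_mul₃_le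
    _ ≤ ‖V‖ * ε * ‖V⁻¹‖ := by gcongr; exact norm_diagonal_le hε hres
    _ = ‖V‖ * ‖V⁻¹‖ * ε := by ring

theorem norm_expSumResidual_le_of_isStarNormal (α β : ι → ℂ) {A : Matrix n n ℂ} [IsStarNormal A]
    (hreal : spectrum ℂ A ⊆ Set.range ((↑) : ℝ → ℂ)) {ε : ℝ} (hε : 0 ≤ ε)
    (hspec : ∀ z ∈ spectrum ℂ A, z ≠ 0 ∧ ‖expSumResidual α β z‖ ≤ ε) :
    ‖expSumResidual α β A‖ ≤ ε := by
  have hA := isHermitian_of_spectrum_subset_range_ofReal hreal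
  set U := hA.eigenvectorUnitary
  have hUinv : (U : Matrix n n ℂ)⁻¹ = star U := inv_eq_right_inv (Unitary.mul_star_self_of_mem U.2)
  have hmem (i : n) : (hA.eigenvalues i : ℂ) ∈ spectrum ℂ A :=
    (spectrum.algebraMap_mem_iff ℂ).mpr (hA.eigenvalues_mem_spectrum_real i)
  have hdecomp : A = U * diagonal (fun i => (hA.eigenvalues i : ℂ)) * (U : Matrix n n ℂ)⁻¹ := by
    rw [hUinv]
    exact hA.spectral_theorem
  have hU : IsUnit (U : Matrix n n ℂ).det := (isUnit_iff_isUnit_det _).mp Unitary.isUnit_coe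
  rw [hdecomp, expSumResidual_conj _ _ _ hU,
    expSumResidual_diagonal _ _ fun i => (hspec _ (hmem i)).1, hUinv,
    CStarRing.norm_mul_coe_unitary, CStarRing.norm_coe_unitary_mul]
  exact norm_diagonal_le hε fun i => (hspec _ (hmem i)).2

end Matrix

/-- If `α j, β j` are the coefficients of an exponential sum of accuracy `ε`
on `[1, R]`, i.e. `|1/x − ∑ j α j e^{−β j x}| ≤ ε` for all `x ∈ [1, R]`, and if
`A = V * D * V⁻¹` is diagonalizable with all eigenvalues real and contained in `[1, R]`, then
`‖A⁻¹ − ∑ j α j exp(−β j A)‖₂ ≤ C ε` with `C = ‖V‖₂ ‖V⁻¹‖₂`; in particular, if `A` is normal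
then the bound holds with `C = 1`. -/
theorem expSum_inverse_error {N m : ℕ} (α β : Fin m → ℝ) (ε R : ℝ) (hε : 0 < ε)
    (hacc : ∀ x ∈ Set.Icc (1 : ℝ) R,
      |1 / x - ∑ j, α j * Real.exp (-(β j) * x)| ≤ ε)
    (A V D : Matrix (Fin N) (Fin N) ℂ)
    (hD : D.IsDiag) (hV : IsUnit V.det) (hA : A = V * D * V⁻¹)
    (hspec : ∀ i, ∃ x : ℝ, D i i = (x : ℂ) ∧ x ∈ Set.Icc (1 : ℝ) R) :
    specNorm (A⁻¹ - ∑ j, (α j : ℂ) • NormedSpace.exp ((-(β j : ℂ)) • A)) ≤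
        (specNorm V * specNorm V⁻¹) * ε ∧
      (IsStarNormal A →
        specNorm (A⁻¹ - ∑ j, (α j : ℂ) • NormedSpace.exp ((-(β j : ℂ)) • A)) ≤ ε) := by
  choose d hd using hspec
  have hdiag : D = Matrix.diagonal fun i => (d i : ℂ) := by
    rw [← hD.diagonal_diag]
    exact congrArg _ (funext fun i => (hd i).1)
  have hd0 (i : Fin N) : (d i : ℂ) ≠ 0 :=
    Complex.ofReal_ne_zero.mpr (zero_lt_one.trans_le (hd i).2.1).ne'
  have hres : ∀ x ∈ Set.Icc (1 : ℝ) R,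
      ‖expSumResidual (fun j => (α j : ℂ)) (fun j => (β j : ℂ)) (x : ℂ)‖ ≤ ε :=
    fun x hx => (norm_expSumResidual_ofReal α β x).trans_le (hacc x hx)
  rw [hdiag] at hA
  refine ⟨?_, fun _ => ?_⟩
  · rw [hA]
    exact Matrix.norm_expSumResidual_conj_diagonal_le _ _ hV hd0 hε.le fun i => hres _ (hd i).2
  · have hspecA : spectrum ℂ A = Set.range fun i => (d i : ℂ) := by
      rw [hA, Matrix.spectrum_conj _ _ hV, spectrum_diagonal]
    refine Matrix.norm_expSumResidual_le_of_isStarNormal _ _ ?_ hε.le ?_ <;> rw [hspecA]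
    · exact Set.range_subset_iff.mpr fun i => ⟨d i, rfl⟩
    · rintro _ ⟨i, rfl⟩
      exact ⟨hd0 i, hres _ (hd i).2⟩
end

section
/- Let D be a real N × N diagonal matrix with D_{NN} ≠ 0, and let A_1, A_2 be real N × N matrices with A_2 entrywise nonnegative, e_N^T (D + A_1 + A_2) = 0, and e_N^T A_1 = 0. Define S = (A_1 + A_2) e_N e_N^T, assume D + A_1 is invertible with (D + A_1)^{-1} entrywise nonpositive, and define the iteration y_{ℓ+1} = −(D + A_1)^{-1}(A_2 − S) y_ℓ starting from an arbitrary vector y_0 ∈ ℝ^N. If y_ℓ is entrywise nonnegative for some ℓ > 0, then y_{ℓ'} is entrywise nonnegative for every ℓ' ≥ ℓ; consequently the partial sums x_m = Σ_{j=0}^{m} y_j satisfy x_{m+1} ≥ x_m entrywise for all m ≥ ℓ. -/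
open scoped Matrix

/-- Let `D` be a real diagonal `N × N` matrix (`N = m + 1`) with
`D_{NN} ≠ 0`, and `A₁, A₂` matrices with `A₂ ≥ 0` entrywise, `e_Nᵀ (D + A₁ + A₂) = 0` and
`e_Nᵀ A₁ = 0`.  Let `S = (A₁ + A₂) e_N e_Nᵀ`, assume `D + A₁` is invertible with
`(D + A₁)⁻¹ ≤ 0` entrywise, and consider the iteration `y_{ℓ+1} = −(D + A₁)⁻¹ (A₂ − S) y_ℓ`
from an arbitrary `y₀`.  If `y_ℓ ≥ 0` entrywise for some `ℓ > 0`, then `y_{ℓ'} ≥ 0` entrywise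
for all `ℓ' ≥ ℓ`; consequently the partial sums `x_m = ∑_{j=0}^m y_j` are entrywise
monotonically nondecreasing from index `ℓ` on. -/
theorem iteration_monotone {m : ℕ}
    (D A₁ A₂ S : Matrix (Fin (m + 1)) (Fin (m + 1)) ℝ)
    (hDdiag : D.IsDiag) (hDNN : D (Fin.last m) (Fin.last m) ≠ 0)
    (hA₂ : ∀ i j, 0 ≤ A₂ i j)
    (hrowN : ∀ j, (D + A₁ + A₂) (Fin.last m) j = 0)
    (hrowA₁ : ∀ j, A₁ (Fin.last m) j = 0)
    (hS : S = Matrix.vecMulVec ((A₁ + A₂) *ᵥ Pi.single (Fin.last m) 1)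
        (Pi.single (Fin.last m) 1))
    (hinv : IsUnit (D + A₁).det)
    (hnonpos : ∀ i j, (D + A₁)⁻¹ i j ≤ 0)
    (y : ℕ → Fin (m + 1) → ℝ)
    (hrec : ∀ ℓ : ℕ, y (ℓ + 1) = -(((D + A₁)⁻¹ * (A₂ - S)) *ᵥ y ℓ))
    (ℓ : ℕ) (hℓ : 0 < ℓ) (hyℓ : ∀ i, 0 ≤ y ℓ i) :
    (∀ ℓ', ℓ ≤ ℓ' → ∀ i, 0 ≤ y ℓ' i) ∧
    (∀ m' : ℕ, ℓ ≤ m' → ∀ i,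
      (∑ j ∈ Finset.range (m' + 1), y j) i ≤ (∑ j ∈ Finset.range (m' + 2), y j) i) := by
  set N := Fin.last m with hNdef
  -- A₂'s last row in terms of D
  have hA2row : ∀ j, A₂ N j = - D N j := by
    intro j
    have := hrowN j
    simp only [Matrix.add_apply, hrowA₁, add_zero] at this
    linarith
  -- the last row of A₂ - S vanishes
  have hSapp : ∀ i j, S i j = (A₁ i N + A₂ i N) * (if j = N then 1 else 0) := by
    intro i j
    rw [hS, Matrix.vecMulVec_apply, Matrix.mulVec_single]
    simp [Matrix.add_apply, Pi.single_apply]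
  have hTrow : ∀ j, (A₂ - S) N j = 0 := by
    intro j
    rw [Matrix.sub_apply, hSapp, hrowA₁, hA2row, hA2row]
    by_cases hj : j = N
    · subst hj; simp
    · have : D N j = 0 := hDdiag (by simpa [hNdef] using (Ne.symm hj))
      simp [hj, this]
  -- last row of (D + A₁)⁻¹
  have hBinv : (D + A₁) * (D + A₁)⁻¹ = 1 := Matrix.mul_nonsing_inv _ hinv
  have hinvrow : ∀ j, (D + A₁)⁻¹ N j = if j = N then (D N N)⁻¹ else 0 := by
    intro j
    have h1 : ((D + A₁) * (D + A₁)⁻¹) N j = D N N * (D + A₁)⁻¹ N j := by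
      rw [Matrix.mul_apply]
      rw [Finset.sum_eq_single N]
      · simp [Matrix.add_apply, hrowA₁]
      · intro k _ hk
        have hD : D N k = 0 := hDdiag (Ne.symm hk)
        simp [Matrix.add_apply, hD, hrowA₁]
      · simp
    rw [hBinv] at h1
    by_cases hj : j = N
    · subst hj
      rw [Matrix.one_apply_eq] at h1
      simp only [if_pos rfl]
      exact eq_inv_of_mul_eq_one_left (by rw [mul_comm]; exact h1.symm)
    · rw [Matrix.one_apply_ne (fun h => hj h.symm)] at h1
      rcases mul_eq_zero.mp h1.symm with h | h
      · exact absurd h hDNN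
      · simp [hj, h]
  have hrec' : ∀ k, y (k + 1) = -((D + A₁)⁻¹ *ᵥ ((A₂ - S) *ᵥ y k)) := by
    intro k; rw [hrec, Matrix.mulVec_mulVec]
  -- the last coordinate is zero from step 1 on
  have hlast : ∀ k, y (k + 1) N = 0 := by
    intro k
    rw [hrec']
    have hw : ∑ x, (A₂ N x - S N x) * y k x = 0 :=
      Finset.sum_eq_zero fun x _ => by
        have h := hTrow x
        rw [Matrix.sub_apply] at h
        rw [h, zero_mul]
    simp only [Pi.neg_apply, neg_eq_zero, Matrix.mulVec, dotProduct, hinvrow,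
      Matrix.sub_apply, ite_mul, zero_mul, Finset.sum_ite_eq, Finset.sum_ite_eq',
      Finset.mem_univ, if_true]
    rw [hw, mul_zero]
  have hylN : y ℓ N = 0 := by
    obtain ⟨n, rfl⟩ := Nat.exists_eq_succ_of_ne_zero hℓ.ne'
    exact hlast n
  -- main induction
  have key : ∀ k, ℓ ≤ k → (∀ i, 0 ≤ y k i) ∧ y k N = 0 := by
    intro k hk
    induction k, hk using Nat.le_induction with
    | base => exact ⟨hyℓ, hylN⟩
    | succ k hk ih =>
      refine ⟨?_, hlast k⟩
      intro i
      rw [hrec']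
      have hw : ∀ j, 0 ≤ ((A₂ - S) *ᵥ y k) j := by
        intro j
        have : ((A₂ - S) *ᵥ y k) j
            = (∑ p, A₂ j p * y k p) - (A₁ j N + A₂ j N) * y k N := by
          simp only [Matrix.mulVec, dotProduct, Matrix.sub_apply, sub_mul,
            Finset.sum_sub_distrib]
          congr 1
          rw [Finset.sum_congr rfl (fun p _ => by rw [hSapp])]
          simp [ite_mul, mul_ite, Finset.sum_ite_eq, Finset.sum_ite_eq']
        rw [this, ih.2, mul_zero, sub_zero]
        exact Finset.sum_nonneg fun p _ => mul_nonneg (hA₂ j p) (ih.1 p)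
      simp only [Pi.neg_apply, neg_nonneg]
      simp only [Matrix.mulVec, dotProduct]
      exact Finset.sum_nonpos fun j _ =>
        mul_nonpos_of_nonpos_of_nonneg (hnonpos i j) (hw j)
  refine ⟨fun ℓ' hℓ' => (key ℓ' hℓ').1, fun m' hm' i => ?_⟩
  rw [Finset.sum_range_succ (n := m' + 1)]
  simp only [Pi.add_apply]
  have := (key (m' + 1) (le_trans hm' (Nat.le_succ _))).1 i
  linarith
end
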